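/- arXiv:math/0610158 — 3 statements merged into one kernel-verified Lean document; each statement's English description precedes it below -/
import Mathlib

section
/- Let G be an abelian group and A a subset of G. Let l be a positive integer and S a subset of G such that every element of S can be represented as the sum of two distinct elements of A in at least 2l−1 ways (not counting permutations). Then the l-fold sumset lS := { s₁ + ⋯ + s_l : s_i ∈ S } is contained in S_A. -/
/-- The set of subset sums of `A` (sums over nonempty finite subsets of `A`). -/
def subsetSums {G : Type*} [AddCommMonoid G] (A : Set G) : Set G :=
  {x | ∃ B : Finset G, ↑B ⊆ A ∧ B.Nonempty ∧ ∑ a ∈ B, a = x}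

/-- The `l`-fold sumset `lS = {s₁ + ⋯ + s_l : sᵢ ∈ S}`. -/
def nfoldSumset {G : Type*} [AddCommMonoid G] (l : ℕ) (S : Set G) : Set G :=
  {x | ∃ f : Fin l → G, (∀ i, f i ∈ S) ∧ ∑ i, f i = x}

/-- A 2-element finset with sum `s` containing `b` must be `{b, s - b}`. -/
lemma pair_det {G : Type*} [AddCommGroup G] [DecidableEq G] {P : Finset G} {s b : G}
    (hc : P.card = 2) (hs : ∑ a ∈ P, a = s) (hb : b ∈ P) : P = {b, s - b} := by
  classical
  obtain ⟨x, y, hxy, rfl⟩ := Finset.card_eq_two.mp hc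
  rw [Finset.sum_pair hxy] at hs
  rcases Finset.mem_insert.mp hb with hbx | hb
  · subst hbx
    have : y = s - b := by rw [eq_sub_iff_add_eq, add_comm]; exact hs
    rw [this]
  · have hby : b = y := Finset.mem_singleton.mp hb
    subst hby
    have : x = s - b := by rw [eq_sub_iff_add_eq]; exact hs
    rw [this, Finset.pair_comm]

lemma key {G : Type*} [AddCommGroup G] (A : Set G) (l : ℕ) (S : Set G)
    (hrep : ∀ x ∈ S, ∃ T : Finset (Finset G), 2 * l - 1 ≤ T.card ∧
      ∀ B ∈ T, B.card = 2 ∧ ↑B ⊆ A ∧ ∑ a ∈ B, a = x) :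
    ∀ L : List G, (∀ s ∈ L, s ∈ S) → L.length ≤ l →
      ∃ B : Finset G, ↑B ⊆ A ∧ B.card = 2 * L.length ∧ ∑ a ∈ B, a = L.sum := by
  classical
  intro L
  induction L with
  | nil => intro _ _; exact ⟨∅, by simp, by simp, by simp⟩
  | cons s L' ih =>
    intro hmem hlen
    obtain ⟨B', hB'A, hB'card, hB'sum⟩ := ih (fun t ht => hmem t (List.mem_cons_of_mem s ht))
      (le_trans (Nat.le_succ _) hlen)
    obtain ⟨T, hTcard, hT⟩ := hrep s (hmem s List.mem_cons_self)
    -- find P ∈ T disjoint from B'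
    have hL' : L'.length + 1 ≤ l := by simpa using hlen
    have hbound : B'.card < T.card := by
      have : 2 * L'.length + 1 ≤ 2 * l - 1 := by omega
      omega
    have : ∃ P ∈ T, Disjoint P B' := by
      by_contra hcon
      push_neg at hcon
      have hchoice : ∀ P ∈ T, ∃ b, b ∈ P ∧ b ∈ B' := by
        intro P hP
        have := hcon P hP
        rw [Finset.not_disjoint_iff] at this
        exact this
      choose g hg1 hg2 using hchoice
      have hinj : Set.InjOn (fun P : {P // P ∈ T} => g P.1 P.2) Set.univ := by
        intro ⟨P₁, h₁⟩ _ ⟨P₂, h₂⟩ _ heq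
        simp only at heq
        obtain ⟨hc₁, _, hs₁⟩ := hT P₁ h₁
        obtain ⟨hc₂, _, hs₂⟩ := hT P₂ h₂
        have hb := hg1 P₁ h₁
        rw [heq] at hb
        have e₁ := pair_det hc₁ hs₁ hb
        have e₂ := pair_det hc₂ hs₂ (hg1 P₂ h₂)
        exact Subtype.ext (e₁.trans e₂.symm)
      -- card T ≤ card B'
      have hle : T.card ≤ B'.card := by
        classical
        have : Function.Injective (fun P : {P // P ∈ T} =>
            (⟨g P.1 P.2, hg2 P.1 P.2⟩ : {b // b ∈ B'})) := by
          intro P₁ P₂ h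
          exact hinj (Set.mem_univ _) (Set.mem_univ _) (congrArg Subtype.val h)
        have := Fintype.card_le_of_injective _ this
        simpa using this
      omega
    obtain ⟨P, hPT, hPdisj⟩ := this
    obtain ⟨hPcard, hPA, hPsum⟩ := hT P hPT
    refine ⟨P ∪ B', ?_, ?_, ?_⟩
    · rw [Finset.coe_union]
      exact Set.union_subset hPA hB'A
    · rw [Finset.card_union_of_disjoint hPdisj, hPcard, hB'card]
      simp [List.length_cons]; ring
    · rw [Finset.sum_union hPdisj, hPsum, hB'sum, List.sum_cons]

theorem stmt_6 {G : Type*} [AddCommGroup G] (A : Set G) (l : ℕ) (hl : 1 ≤ l)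
    (S : Set G)
    (hrep : ∀ x ∈ S, ∃ T : Finset (Finset G), 2 * l - 1 ≤ T.card ∧
      ∀ B ∈ T, B.card = 2 ∧ ↑B ⊆ A ∧ ∑ a ∈ B, a = x) :
    nfoldSumset l S ⊆ subsetSums A := by
  intro x hx
  obtain ⟨f, hf, hsum⟩ := hx
  obtain ⟨B, hBA, hBcard, hBsum⟩ := key A l S hrep (List.ofFn f)
    (fun t ht => by obtain ⟨i, rfl⟩ := List.mem_ofFn.mp ht; exact hf i)
    (by simp)
  refine ⟨B, hBA, ?_, ?_⟩
  · rw [← Finset.card_pos, hBcard]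
    simp [List.length_ofFn]; omega
  · rw [hBsum, ← hsum]
    simp [List.sum_ofFn]
end

section
/- Let G be a finite abelian group and let A be a subset of G with |A| ≥ ⌊|G|/2⌋ + 2. Then S_A = G, i.e., A is complete. -/
/-- `A` is complete if every element of `G` is a sum of distinct elements of `A`. -/
def IsCompleteSet {G : Type*} [AddCommMonoid G] (A : Set G) : Prop :=
  subsetSums A = Set.univ

section aux
variable {G : Type*} [AddCommGroup G] [Fintype G] [DecidableEq G]

lemma aux_mem_inter_iff (A' : Finset G) (c x : G) :
    x ∈ A' ∩ A'.image (fun y => c - y) ↔ x ∈ A' ∧ c - x ∈ A' := by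
  simp only [Finset.mem_inter, Finset.mem_image]
  constructor
  · rintro ⟨hx, y, hy, rfl⟩
    exact ⟨hx, by simpa using hy⟩
  · rintro ⟨hx, h⟩
    exact ⟨hx, ⟨c - x, h, by abel⟩⟩

lemma aux_inter_card (A' : Finset G) (c : G) :
    A'.card + A'.card ≤ (A' ∩ A'.image (fun y => c - y)).card + Fintype.card G := by
  have h1 : (A'.image (fun y => c - y)).card = A'.card :=
    Finset.card_image_of_injective _ sub_right_injective
  have h2 := Finset.card_union_add_card_inter A' (A'.image (fun y => c - y))
  have h3 : (A' ∪ A'.image (fun y => c - y)).card ≤ Fintype.card G :=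
    Finset.card_le_univ _
  omega

end aux

theorem stmt_7 {G : Type*} [AddCommGroup G] [Fintype G] (A : Set G)
    (hA : Nat.card G / 2 + 2 ≤ A.ncard) :
    IsCompleteSet A := by
  classical
  have hn : Nat.card G = Fintype.card G := Nat.card_eq_fintype_card
  set A' := A.toFinset with hA'def
  have hcard : A.ncard = A'.card := A.ncard_eq_toFinset_card'
  have hsub : ∀ x, x ∈ A' → x ∈ A := fun x hx => Set.mem_toFinset.mp hx
  have hAcard : Fintype.card G / 2 + 2 ≤ A'.card := by omega
  rw [IsCompleteSet]
  apply Set.eq_univ_of_forall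
  intro g
  rcases Nat.even_or_odd (Fintype.card G) with heven | hodd
  · -- even case: triple counting
    obtain ⟨r, hr⟩ := heven
    have h2A : Fintype.card G + 4 ≤ 2 * A'.card := by omega
    set P := (A' ×ˢ A').filter (fun p => g - p.1 - p.2 ∈ A') with hPdef
    have hfiber : ∀ x ∈ A', 4 ≤ (P.filter fun p => p.1 = x).card := by
      intro x hx
      have hkey := aux_inter_card A' (g - x)
      have heq : A'.filter (fun y => g - x - y ∈ A')
          = A' ∩ A'.image (fun y => (g - x) - y) := by
        ext z
        simp only [Finset.mem_filter, aux_mem_inter_iff]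
      have h4 : 4 ≤ (A'.filter (fun y => g - x - y ∈ A')).card := by
        rw [heq]; omega
      refine le_trans h4 (Finset.card_le_card_of_injOn (fun y => (x, y)) ?_ ?_)
      · intro y hy
        refine Finset.mem_filter.mpr ⟨?_, rfl⟩
        exact Finset.mem_filter.mpr ⟨Finset.mem_product.mpr
          ⟨hx, (Finset.mem_filter.mp hy).1⟩, (Finset.mem_filter.mp hy).2⟩
      · intro a _ b _ h
        exact congrArg Prod.snd h
    have hPcard : 4 * A'.card ≤ P.card := by
      have hfw : P.card = ∑ x ∈ A', (P.filter fun p => p.1 = x).card :=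
        Finset.card_eq_sum_card_fiberwise (fun p hp =>
          (Finset.mem_product.mp (Finset.mem_filter.mp hp).1).1)
      have := Finset.card_nsmul_le_sum A' (fun x => (P.filter fun p => p.1 = x).card) 4 hfiber
      simpa [hfw, mul_comm] using this
    -- bad pairs
    have hB1 : (P.filter fun p => p.1 = p.2).card ≤ A'.card := by
      apply Finset.card_le_card_of_injOn (fun p => p.1)
      · intro p hp
        simp only [Finset.mem_coe, Finset.mem_filter, Finset.mem_product, hPdef] at hp
        exact hp.1.1.1
      · intro p hp q hq h
        have h' : p.1 = q.1 := h
        simp only [Finset.mem_coe, Finset.mem_filter] at hp hq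
        exact Prod.ext h' (by rw [← hp.2, ← hq.2, h'])
    have hB2 : (P.filter fun p => g - p.1 - p.2 = p.1).card ≤ A'.card := by
      apply Finset.card_le_card_of_injOn (fun p => p.1)
      · intro p hp
        simp only [Finset.mem_coe, Finset.mem_filter, Finset.mem_product, hPdef] at hp
        exact hp.1.1.1
      · intro p hp q hq h
        have h' : p.1 = q.1 := h
        simp only [Finset.mem_coe, Finset.mem_filter] at hp hq
        have e : g - p.1 - p.2 = g - p.1 - q.2 := by
          rw [hp.2, h']; exact hq.2.symm
        exact Prod.ext h' (sub_right_injective e)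
    have hB3 : (P.filter fun p => g - p.1 - p.2 = p.2).card ≤ A'.card := by
      apply Finset.card_le_card_of_injOn (fun p => p.2)
      · intro p hp
        simp only [Finset.mem_coe, Finset.mem_filter, Finset.mem_product, hPdef] at hp
        exact hp.1.1.2
      · intro p hp q hq h
        have h' : p.2 = q.2 := h
        simp only [Finset.mem_coe, Finset.mem_filter] at hp hq
        have e : g - p.1 - p.2 = g - q.1 - p.2 := by
          rw [hp.2, h']; exact hq.2.symm
        have e2 : g - p.1 = g - q.1 := sub_left_injective e
        exact Prod.ext (sub_right_injective e2) h'
    have hBd : (P.filter fun p => p.1 = p.2 ∨ g - p.1 - p.2 = p.1 ∨ g - p.1 - p.2 = p.2).card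
        ≤ 3 * A'.card := by
      have hsplit : (P.filter fun p => p.1 = p.2 ∨ g - p.1 - p.2 = p.1 ∨ g - p.1 - p.2 = p.2)
          ⊆ (P.filter fun p => p.1 = p.2) ∪ (P.filter fun p => g - p.1 - p.2 = p.1)
            ∪ (P.filter fun p => g - p.1 - p.2 = p.2) := by
        intro p hp
        simp only [Finset.mem_filter, Finset.mem_union] at hp ⊢
        tauto
      calc _ ≤ _ := Finset.card_le_card hsplit
        _ ≤ _ + _ := Finset.card_union_le _ _
        _ ≤ (_ + _) + _ := by gcongr; exact Finset.card_union_le _ _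
        _ ≤ 3 * A'.card := by omega
    have hex : ∃ p ∈ P, p ∉ (P.filter fun p => p.1 = p.2 ∨ g - p.1 - p.2 = p.1 ∨ g - p.1 - p.2 = p.2) := by
      by_contra hc
      push_neg at hc
      have hsub2 : P ⊆ _ := hc
      have := Finset.card_le_card hsub2
      omega
    obtain ⟨p, hpP, hpBd⟩ := hex
    have hpconds : p.1 ∈ A' ∧ p.2 ∈ A' ∧ g - p.1 - p.2 ∈ A' := by
      simp only [hPdef, Finset.mem_filter, Finset.mem_product] at hpP
      exact ⟨hpP.1.1, hpP.1.2, hpP.2⟩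
    have hne : ¬(p.1 = p.2 ∨ g - p.1 - p.2 = p.1 ∨ g - p.1 - p.2 = p.2) := by
      intro h
      exact hpBd (Finset.mem_filter.mpr ⟨hpP, h⟩)
    push_neg at hne
    obtain ⟨h12, h31, h32⟩ := hne
    refine ⟨{p.1, p.2, g - p.1 - p.2}, ?_, ?_, ?_⟩
    · intro t ht
      simp only [Finset.coe_insert, Set.mem_insert_iff, Finset.coe_singleton,
        Set.mem_singleton_iff] at ht
      rcases ht with rfl | rfl | rfl
      · exact hsub _ hpconds.1
      · exact hsub _ hpconds.2.1
      · exact hsub _ hpconds.2.2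
    · exact ⟨p.1, by simp⟩
    · rw [Finset.sum_insert (by simp [h12, Ne.symm h31]), Finset.sum_insert (by simp [Ne.symm h32]),
        Finset.sum_singleton]
      abel
  · -- odd case
    obtain ⟨r, hr⟩ := hodd
    have hinj : ∀ x y : G, x + x = y + y → x = y := by
      intro x y h
      have h0 : 2 • (x - y) = 0 := by
        rw [two_nsmul]
        have e : (x - y) + (x - y) = (x + x) - (y + y) := by abel
        rw [e, h, sub_self]
      have hdvd2 : addOrderOf (x - y) ∣ 2 := addOrderOf_dvd_iff_nsmul_eq_zero.mpr h0
      have hdvdn : addOrderOf (x - y) ∣ Fintype.card G := addOrderOf_dvd_card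
      have h1 : addOrderOf (x - y) = 1 := by
        rcases (Nat.dvd_prime Nat.prime_two).mp hdvd2 with h1 | h2
        · exact h1
        · exfalso; rw [h2] at hdvdn; omega
      have h2 := addOrderOf_nsmul_eq_zero (x - y)
      rw [h1, one_nsmul] at h2
      exact sub_eq_zero.mp h2
    set I := A' ∩ A'.image (fun y => g - y) with hIdef
    have hI : 2 ≤ I.card := by
      have hk := aux_inter_card A' g
      rw [← hIdef] at hk
      omega
    have hex : ∃ x ∈ I, x + x ≠ g := by
      by_contra hc
      push_neg at hc
      obtain ⟨a, ha, b, hb, hab⟩ := Finset.one_lt_card.mp (by omega : 1 < I.card)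
      exact hab (hinj a b (by rw [hc a ha, hc b hb]))
    obtain ⟨x, hxI, hxg⟩ := hex
    obtain ⟨hx1, hx2⟩ := (aux_mem_inter_iff A' g x).mp hxI
    have hne : x ≠ g - x := by
      intro h
      exact hxg (by rw [← sub_add_cancel g x, ← h])
    refine ⟨{x, g - x}, ?_, ?_, ?_⟩
    · intro t ht
      simp only [Finset.coe_insert, Set.mem_insert_iff, Finset.coe_singleton,
        Set.mem_singleton_iff] at ht
      rcases ht with rfl | rfl
      · exact hsub _ hx1
      · exact hsub _ hx2
    · exact ⟨x, by simp⟩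
    · rw [Finset.sum_pair hne]
      abel
end

section
/- Let G be a finite abelian group of order n and let p be the smallest prime divisor of n. If A is a nice incomplete subset of G, then |A| ≤ n/p + p − 2. -/
/-- `A` is nice if there is a subgroup `H` of prime index with `S_{A ∩ H} = H`. -/
def IsNice {G : Type*} [AddCommGroup G] (A : Set G) : Prop :=
  ∃ H : AddSubgroup G, H.index.Prime ∧ subsetSums (A ∩ ↑H) = (H : Set G)

open Finset

lemma aux_key_step {K : Type*} [AddCommGroup K] [Fintype K] {q : ℕ} (hq : q.Prime)
    (hcard : Fintype.card K = q) {a : K} (ha : a ≠ 0) (S : Finset K) (hS : S.Nonempty)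
    (hclosed : ∀ s ∈ S, a + s ∈ S) : S = Finset.univ := by
  -- a generates K
  have horder : addOrderOf a = q := by
    have h1 : addOrderOf a ∣ q := hcard ▸ addOrderOf_dvd_card
    rcases (Nat.Prime.eq_one_or_self_of_dvd hq _ h1) with h | h
    · exfalso
      have h0 := addOrderOf_nsmul_eq_zero a
      rw [h, one_nsmul] at h0
      exact ha h0
    · exact h
  have htop : AddSubgroup.zmultiples a = ⊤ := by
    apply AddSubgroup.eq_top_of_card_eq
    rw [Nat.card_zmultiples a, horder, Nat.card_eq_fintype_card, hcard]
  have hnat : ∀ y : K, ∃ m : ℕ, m • a = y := by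
    intro y
    have : y ∈ AddSubgroup.zmultiples a := htop ▸ AddSubgroup.mem_top y
    obtain ⟨z, hz⟩ := AddSubgroup.mem_zmultiples_iff.mp this
    refine ⟨(z % q).toNat, ?_⟩
    have hq0 : (0:ℤ) < q := by exact_mod_cast hq.pos
    have hzq : (q:ℤ) • a = 0 := by
      have h0 : Fintype.card K • a = 0 := card_nsmul_eq_zero
      rw [hcard] at h0
      rw [natCast_zsmul]
      exact h0
    have hmod : (z % q) • a = z • a := by
      conv_rhs => rw [show z = q * (z / q) + z % q from (Int.mul_ediv_add_emod z q).symm]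
      rw [add_zsmul, mul_comm, mul_zsmul, hzq, smul_zero, zero_add]
    have hcast : (((z % q).toNat : ℤ)) = z % q := Int.toNat_of_nonneg (Int.emod_nonneg z (ne_of_gt hq0))
    calc ((z % q).toNat) • a = (((z % q).toNat : ℤ)) • a := (natCast_zsmul a _).symm
      _ = (z % q) • a := by rw [hcast]
      _ = z • a := hmod
      _ = y := hz
  obtain ⟨s0, hs0⟩ := hS
  have hstep : ∀ m : ℕ, m • a + s0 ∈ S := by
    intro m
    induction m with
    | zero => simpa using hs0
    | succ k ih =>
      have := hclosed _ ih
      rwa [← add_assoc, ← succ_nsmul'] at this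
  apply Finset.eq_univ_of_forall
  intro g
  obtain ⟨m, hm⟩ := hnat (g - s0)
  have := hstep m
  rwa [hm, sub_add_cancel] at this

lemma aux_sums_card {G K : Type*} [AddCommGroup G] [AddCommGroup K] [Fintype K]
    [DecidableEq K] [DecidableEq G] {q : ℕ} (hq : q.Prime)
    (hcard : Fintype.card K = q) (π : G →+ K) (F : Finset G)
    (hF : ∀ b ∈ F, π b ≠ 0) :
    min q (F.card + 1) ≤ (F.powerset.image fun B => π (∑ x ∈ B, x)).card := by
  induction F using Finset.induction_on with
  | empty =>
    simp only [Finset.card_empty, Finset.powerset_empty, Finset.image_singleton]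
    simp
  | insert a F ha ih =>
    have hFa : ∀ b ∈ F, π b ≠ 0 := fun b hb => hF b (Finset.mem_insert_of_mem hb)
    have hπa : π a ≠ 0 := hF a (Finset.mem_insert_self a F)
    set T := F.powerset.image fun B => π (∑ x ∈ B, x) with hT
    have hTne : T.Nonempty := ⟨π 0, Finset.mem_image.mpr ⟨∅, by simp, by simp⟩⟩
    have hT' : (insert a F).powerset.image (fun B => π (∑ x ∈ B, x))
        = T ∪ T.image (fun t => π a + t) := by
      rw [Finset.powerset_insert, Finset.image_union, Finset.image_image]
      congr 1
      ext y
      simp only [Finset.mem_image, Finset.mem_powerset, Function.comp_apply, hT]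
      constructor
      · rintro ⟨B, hB, rfl⟩
        refine ⟨π (∑ x ∈ B, x), ⟨B, hB, rfl⟩, ?_⟩
        rw [Finset.sum_insert (fun h => ha (hB h)), map_add]
      · rintro ⟨t, ⟨B, hB, rfl⟩, rfl⟩
        exact ⟨B, hB, by rw [Finset.sum_insert (fun h => ha (hB h)), map_add]⟩
    rw [hT']
    by_cases hcl : ∀ t ∈ T, (π a + t) ∈ T
    · have : T = Finset.univ := aux_key_step hq hcard hπa T hTne hcl
      calc min q ((insert a F).card + 1) ≤ q := min_le_left _ _
        _ = T.card := by rw [this, Finset.card_univ, hcard]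
        _ ≤ _ := Finset.card_le_card Finset.subset_union_left
    · push_neg at hcl
      obtain ⟨t, ht, hat⟩ := hcl
      have hsub : insert (π a + t) T ⊆ T ∪ T.image (fun t => π a + t) := by
        intro x hx
        rcases Finset.mem_insert.mp hx with rfl | hx
        · exact Finset.mem_union_right _ (Finset.mem_image_of_mem _ ht)
        · exact Finset.mem_union_left _ hx
      have h1 : T.card + 1 ≤ (T ∪ T.image (fun t => π a + t)).card := by
        calc T.card + 1 = (insert (π a + t) T).card := (Finset.card_insert_of_notMem hat).symm
          _ ≤ _ := Finset.card_le_card hsub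
      have h2 := ih hFa
      rw [Finset.card_insert_of_notMem ha]
      have : min q (F.card + 1 + 1) ≤ min q (F.card + 1) + 1 := by omega
      omega

theorem stmt_12 {G : Type*} [AddCommGroup G] [Fintype G] (n : ℕ) (hn : n = Nat.card G)
    (p : ℕ) (hp : p.Prime) (hpn : p ∣ n)
    (hpmin : ∀ r : ℕ, r.Prime → r ∣ n → p ≤ r)
    (A : Set G) (hnice : IsNice A) (hinc : ¬ IsCompleteSet A) :
    A.ncard ≤ n / p + p - 2 := by
  classical
  obtain ⟨H, hq, hS⟩ := hnice
  set q := H.index with hqdef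
  have hqn : q ∣ n := hn ▸ H.index_dvd_card
  have hpq : p ≤ q := hpmin q hq hqn
  have hnpos : 0 < n := by
    rw [hn]; exact Nat.card_pos
  -- quotient setup
  have hfinQ : Finite (G ⧸ H) := Quotient.finite _
  have := Fintype.ofFinite (G ⧸ H)
  have hcardQ : Fintype.card (G ⧸ H) = q := by
    rw [← Nat.card_eq_fintype_card, ← AddSubgroup.index_eq_card]
  set π : G →+ G ⧸ H := QuotientAddGroup.mk' H with hπ
  -- bound on A ∩ H
  have hAH : (A ∩ (H : Set G)).ncard ≤ n / q := by
    have h1 : (A ∩ (H : Set G)).ncard ≤ (H : Set G).ncard :=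
      Set.ncard_le_ncard Set.inter_subset_right (Set.toFinite _)
    have h2 : (H : Set G).ncard = Nat.card H := (Nat.card_coe_set_eq _).symm
    have h3 : Nat.card H * q = n := hn ▸ H.card_mul_index
    have : Nat.card H = n / q := by
      rw [← h3, Nat.mul_div_cancel _ hq.pos]
    omega
  -- bound on A \ H
  have hAd : (A \ (H : Set G)).ncard ≤ q - 2 := by
    by_contra hcon
    push_neg at hcon
    have hge : q - 1 ≤ (A \ (H : Set G)).ncard := by omega
    have hfin : (A \ (H : Set G)).Finite := Set.toFinite _
    rw [Set.ncard_eq_toFinset_card' ] at hge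
    obtain ⟨F, hFsub, hFcard⟩ := Finset.exists_subset_card_eq hge
    have hFmem : ∀ b ∈ F, b ∈ A ∧ b ∉ (H : Set G) := by
      intro b hb
      have := hFsub hb
      rw [Set.mem_toFinset] at this
      exact this
    have hFnz : ∀ b ∈ F, π b ≠ 0 := by
      intro b hb h0
      exact (hFmem b hb).2 ((QuotientAddGroup.eq_zero_iff b).mp h0)
    have hmin := aux_sums_card hq hcardQ π F hFnz
    rw [hFcard] at hmin
    have hq2 : 2 ≤ q := hq.two_le
    have : q ≤ (F.powerset.image fun B => π (∑ x ∈ B, x)).card := by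
      rw [show q - 1 + 1 = q by omega] at hmin; simpa using hmin
    have huniv : (F.powerset.image fun B => π (∑ x ∈ B, x)) = Finset.univ := by
      apply Finset.eq_univ_of_card
      have := Finset.card_le_univ (F.powerset.image fun B => π (∑ x ∈ B, x))
      rw [hcardQ] at this
      omega
    apply hinc
    apply Set.eq_univ_of_forall
    intro g
    have : π g ∈ (F.powerset.image fun B => π (∑ x ∈ B, x)) := huniv ▸ Finset.mem_univ _
    obtain ⟨B, hB, hBsum⟩ := Finset.mem_image.mp this
    rw [Finset.mem_powerset] at hB
    have hmem : g - ∑ x ∈ B, x ∈ H := by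
      have : π (g - ∑ x ∈ B, x) = 0 := by rw [map_sub, hBsum, sub_self]
      exact (QuotientAddGroup.eq_zero_iff _).mp this
    have : g - ∑ x ∈ B, x ∈ subsetSums (A ∩ (H : Set G)) := by rw [hS]; exact hmem
    obtain ⟨C, hCsub, hCne, hCsum⟩ := this
    have hdisj : Disjoint B C := by
      rw [Finset.disjoint_left]
      intro x hx hxC
      have hx1 : x ∉ (H : Set G) := (hFmem x (hB hx)).2
      have hx2 : x ∈ (H : Set G) := (hCsub hxC).2
      exact hx1 hx2
    refine ⟨B ∪ C, ?_, ?_, ?_⟩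
    · intro x hx
      rcases Finset.mem_union.mp (by exact_mod_cast hx) with hx | hx
      · exact (hFmem x (hB hx)).1
      · exact (hCsub hx).1
    · exact hCne.mono (Finset.subset_union_right)
    · rw [Finset.sum_union hdisj, hCsum]; abel
  -- combine
  have hsplit : (A ∩ (H : Set G)).ncard + (A \ (H : Set G)).ncard = A.ncard :=
    Set.ncard_inter_add_ncard_diff_eq_ncard A (H : Set G) (Set.toFinite _)
  have hq2 : 2 ≤ q := hq.two_le
  have hp2 : 2 ≤ p := hp.two_le
  -- arithmetic: n / q + q ≤ n / p + p
  have harith : n / q + q ≤ n / p + p := by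
    rcases eq_or_lt_of_le hpq with rfl | hlt
    · rfl
    · obtain ⟨m, hm⟩ := hqn
      have hmpos : 0 < m := Nat.pos_of_ne_zero (fun h => by rw [h, mul_zero] at hm; omega)
      have hpm : p ∣ m := by
        have : p ∣ q * m := hm ▸ hpn
        rcases (Nat.Prime.dvd_mul hp).mp this with h | h
        · exact absurd ((Nat.prime_dvd_prime_iff_eq hp hq).mp h) (by omega)
        · exact h
      obtain ⟨k, hk⟩ := hpm
      have hkpos : 0 < k := Nat.pos_of_ne_zero (fun h => by rw [h, mul_zero] at hk; omega)
      have h1 : n / q = m := by rw [hm, Nat.mul_div_cancel_left _ hq.pos]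
      have h2 : n / p = q * k := by
        rw [hm, hk, show q * (p * k) = p * (q * k) by ring, Nat.mul_div_cancel_left _ hp.pos]
      rw [h1, h2, hk]
      nlinarith
  have hnq1 : 1 ≤ n / q := Nat.one_le_div_iff hq.pos |>.mpr (Nat.le_of_dvd hnpos hqn)
  have hnp1 : 1 ≤ n / p := Nat.one_le_div_iff hp.pos |>.mpr (Nat.le_of_dvd hnpos hpn)
  omega
end
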